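/- arXiv:1405.3146 — 9 statements merged into one kernel-verified Lean document; each statement's English description precedes it below -/
import Mathlib

section
/- For every real number x and every integer k ≥ 1, F_k(x)² − x·F_{k−1}(x)² = F_{2k}(x). -/
/-- The two-variable Fibonacci polynomials: `F_0 = F_1 = 1`, `F_2 = 1 - z`,
`F_k = F_{k-1} - x F_{k-2}` for `k ≥ 3`. -/
noncomputable def fibPoly (x z : ℝ) : ℕ → ℝ
  | 0 => 1
  | 1 => 1
  | 2 => 1 - z
  | (k + 3) => fibPoly x z (k + 2) - x * fibPoly x z (k + 1)

/-! The addition formula `F_{a+b+2} = F_{a+1} F_{b+1} - x F_a F_b` follows by induction on `b`,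
shifting `a` by one at each step; taking `a = b = k - 1` gives the doubling identity. -/

theorem fibPoly_diag_add_two (x : ℝ) (n : ℕ) :
    fibPoly x x (n + 2) = fibPoly x x (n + 1) - x * fibPoly x x n := by
  cases n with
  | zero => simp [fibPoly]
  | succ m => rfl

theorem fibPoly_diag_add_add_two (x : ℝ) (a b : ℕ) :
    fibPoly x x (a + b + 2) =
      fibPoly x x (a + 1) * fibPoly x x (b + 1) - x * fibPoly x x a * fibPoly x x b := by
  induction b generalizing a with
  | zero => simp [fibPoly_diag_add_two, fibPoly]
  | succ b ih =>
    rw [show a + (b + 1) + 2 = (a + 1) + b + 2 by ring, ih, fibPoly_diag_add_two x a,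
      fibPoly_diag_add_two x b]
    ring

/-- For every real `x` and every `k ≥ 1`,
`F_k(x)² − x·F_{k−1}(x)² = F_{2k}(x)`, where `F_k(x) = F_k(x,x)`. -/
theorem stmt_1 (x : ℝ) (k : ℕ) (hk : 1 ≤ k) :
    (fibPoly x x k) ^ 2 - x * (fibPoly x x (k - 1)) ^ 2 = fibPoly x x (2 * k) := by
  obtain ⟨a, rfl⟩ := Nat.exists_eq_add_of_le' hk
  rw [show 2 * (a + 1) = a + a + 2 by ring, fibPoly_diag_add_add_two, Nat.add_sub_cancel]
  ring
end

section
/- For all real numbers x and z with z ≠ 1, and every integer k ≥ 1, F_k(x, x/(1−z)) = F_{k+1}(x, z)/(1 − z). -/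
theorem eq_fibPoly_of_recurrence {x w : ℝ} {u : ℕ → ℝ} (h₁ : u 1 = 1) (h₂ : u 2 = 1 - w)
    (hrec : ∀ k, u (k + 3) = u (k + 2) - x * u (k + 1)) (k : ℕ) (hk : 1 ≤ k) :
    u k = fibPoly x w k := by
  have hpair : ∀ n, u (n + 1) = fibPoly x w (n + 1) ∧ u (n + 2) = fibPoly x w (n + 2) := by
    intro n
    induction n with
    | zero => exact ⟨h₁, h₂⟩
    | succ n ih =>
      refine ⟨ih.2, ?_⟩
      rw [hrec, ih.1, ih.2, fibPoly]
  obtain ⟨n, rfl⟩ := Nat.exists_eq_add_of_le' hk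
  exact (hpair n).1

/-- For all reals `x, z` with `z ≠ 1` and every `k ≥ 1`,
`F_k(x, x/(1−z)) = F_{k+1}(x, z)/(1 − z)`. -/
theorem stmt_4 (x z : ℝ) (hz : z ≠ 1) (k : ℕ) (hk : 1 ≤ k) :
    fibPoly x (x / (1 - z)) k = fibPoly x z (k + 1) / (1 - z) := by
  have hz' : (1 : ℝ) - z ≠ 0 := sub_ne_zero.mpr hz.symm
  refine (eq_fibPoly_of_recurrence (u := fun k ↦ fibPoly x z (k + 1) / (1 - z))
    ?_ ?_ ?_ k hk).symm
  · simp only [fibPoly, div_self hz']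
  · simp only [fibPoly]
    field_simp
  · intro k
    simp only [fibPoly]
    ring
end

section
/- Let M be a p×q Boolean quasi-permutation matrix (each row and each column of M contains at most one true entry), having exactly x all-false columns and y all-false rows. Then p + x = q + y, and every permutation σ of size n such that (i) the permutation matrix of σ contains M as a submatrix, and (ii) every permutation properly contained in σ as a classical pattern (i.e., contained in σ and of size strictly smaller than n) does not contain M as a submatrix of its permutation matrix, satisfies n = p + x. -/
/-- `A` is a submatrix of `B`: rows and columns are selected via strictly
increasing index maps. -/
def IsSubmatrix {p q m n : ℕ} (A : Fin p → Fin q → Bool) (B : Fin m → Fin n → Bool) : Prop :=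
  ∃ r : Fin p → Fin m, ∃ c : Fin q → Fin n,
    StrictMono r ∧ StrictMono c ∧ ∀ i j, A i j = B (r i) (c j)

/-- The permutation matrix of `σ`: entry `(i,j)` is true iff `σ j = i`
(rows numbered bottom-to-top, rows indexed by values). -/
def PermMatrix {n : ℕ} (σ : Equiv.Perm (Fin n)) : Fin n → Fin n → Bool :=
  fun i j => decide (σ j = i)

/-- Classical pattern containment: `σ` contains `π`. -/
def PermContains {n k : ℕ} (σ : Equiv.Perm (Fin n)) (π : Equiv.Perm (Fin k)) : Prop :=
  ∃ f : Fin k → Fin n, StrictMono f ∧ ∀ i j, π i < π j ↔ σ (f i) < σ (f j)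

/-- A Boolean quasi-permutation matrix: at most one true entry in each row
and each column. -/
def IsQuasiPerm {p q : ℕ} (M : Fin p → Fin q → Bool) : Prop :=
  (∀ (i : Fin p) (j₁ j₂ : Fin q), M i j₁ = true → M i j₂ = true → j₁ = j₂) ∧
  (∀ (j : Fin q) (i₁ i₂ : Fin p), M i₁ j = true → M i₂ j = true → i₁ = i₂)

/-! Every `true` entry of a quasi-permutation matrix is alone in its row and in its column, so
nonzero rows and nonzero columns are both in bijection with the `true` entries, which gives
`p + x = q + y`. If `σ` contains `M` at rows `r` and columns `c`, keep the positions `c j` together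
with the positions `σ⁻¹ (r i)` of the zero rows `i`: these are `q + y` positions, and the pattern
of `σ` on them still contains `M`, because a nonzero row `i` has its position `σ⁻¹ (r i)` among the
`c j` already. Hence minimality gives `n ≤ q + y`. -/

open Finset

theorem IsSubmatrix.restrict {p q m n m' n' : ℕ} {A : Fin p → Fin q → Bool}
    {B : Fin m → Fin n → Bool} (R : Finset (Fin m)) (C : Finset (Fin n))
    (hR : #R = m') (hC : #C = n') {r : Fin p → Fin m} {c : Fin q → Fin n}
    (hr : StrictMono r) (hc : StrictMono c) (hA : ∀ i j, A i j = B (r i) (c j))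
    (hrR : ∀ i, r i ∈ R) (hcC : ∀ j, c j ∈ C) :
    IsSubmatrix A fun a b => B (R.orderEmbOfFin hR a) (C.orderEmbOfFin hC b) := by
  refine ⟨fun i => (R.orderIsoOfFin hR).symm ⟨r i, hrR i⟩,
    fun j => (C.orderIsoOfFin hC).symm ⟨c j, hcC j⟩, ?_, ?_, fun i j => ?_⟩
  · exact fun i₁ i₂ h => (R.orderIsoOfFin hR).symm.strictMono (Subtype.mk_lt_mk.mpr (hr h))
  · exact fun j₁ j₂ h => (C.orderIsoOfFin hC).symm.strictMono (Subtype.mk_lt_mk.mpr (hc h))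
  · simp [← coe_orderIsoOfFin_apply, hA]

namespace Equiv.Perm

variable {n : ℕ} (σ : Perm (Fin n)) (S : Finset (Fin n))

/-- The values of `σ` at the positions `S`, standardized to a permutation of `Fin #S`. -/
def patternOn : Perm (Fin #S) :=
  (S.orderIsoOfFin rfl).toEquiv.trans <|
    (σ.subtypeEquiv fun _ => (mem_map' σ.toEmbedding).symm).trans
      ((S.map σ.toEmbedding).orderIsoOfFin (card_map _)).symm.toEquiv

theorem orderEmbOfFin_patternOn (j : Fin #S) :
    (S.map σ.toEmbedding).orderEmbOfFin (card_map _) (σ.patternOn S j) =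
      σ (S.orderEmbOfFin rfl j) := by
  simp [patternOn, ← coe_orderIsoOfFin_apply]

theorem permContains_patternOn : PermContains σ (σ.patternOn S) := by
  refine ⟨S.orderEmbOfFin rfl, (S.orderEmbOfFin rfl).strictMono, fun i j => ?_⟩
  rw [← ((S.map σ.toEmbedding).orderEmbOfFin (card_map _)).lt_iff_lt,
    orderEmbOfFin_patternOn, orderEmbOfFin_patternOn]

theorem permMatrix_patternOn :
    PermMatrix (σ.patternOn S) = fun a b =>
      PermMatrix σ ((S.map σ.toEmbedding).orderEmbOfFin (card_map _) a)
        (S.orderEmbOfFin rfl b) := by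
  ext a b
  simp only [PermMatrix, ← orderEmbOfFin_patternOn, EmbeddingLike.apply_eq_iff_eq]

theorem isSubmatrix_permMatrix_patternOn {p q : ℕ} {M : Fin p → Fin q → Bool}
    {r : Fin p → Fin n} {c : Fin q → Fin n} (hr : StrictMono r) (hc : StrictMono c)
    (hσ : ∀ i j, M i j = PermMatrix σ (r i) (c j)) (hrS : ∀ i, σ.symm (r i) ∈ S)
    (hcS : ∀ j, c j ∈ S) :
    IsSubmatrix M (PermMatrix (σ.patternOn S)) := by
  rw [σ.permMatrix_patternOn S]
  exact .restrict _ _ _ _ hr hc hσ (fun i => mem_map_equiv.mpr (hrS i)) hcS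

end Equiv.Perm

theorem IsQuasiPerm.card_zeroRows_add_card_trueEntries {p q : ℕ} {M : Fin p → Fin q → Bool}
    (hM : IsQuasiPerm M) :
    #{i | ∀ j, M i j = false} + #{e : Fin p × Fin q | M e.1 e.2 = true} = p := by
  set T : Finset (Fin p × Fin q) := {e | M e.1 e.2 = true}
  have hinj : Set.InjOn Prod.fst (T : Set (Fin p × Fin q)) := by
    rintro ⟨i, j⟩ he ⟨i', j'⟩ he' (rfl : i = i')
    simp only [T, mem_coe, mem_filter, mem_univ, true_and] at he he'
    rw [hM.1 i j j' he he']
  have hrows : T.image Prod.fst = ({i | ¬ ∀ j, M i j = false} : Finset (Fin p)) := by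
    ext i
    simp [T]
  rw [← card_image_of_injOn hinj, hrows, card_filter_add_card_filter_not, card_univ,
    Fintype.card_fin]

theorem IsQuasiPerm.transpose {p q : ℕ} {M : Fin p → Fin q → Bool} (hM : IsQuasiPerm M) :
    IsQuasiPerm fun j i => M i j :=
  ⟨hM.2, hM.1⟩

theorem IsQuasiPerm.card_zeroCols_add_card_trueEntries {p q : ℕ} {M : Fin p → Fin q → Bool}
    (hM : IsQuasiPerm M) :
    #{j | ∀ i, M i j = false} + #{e : Fin p × Fin q | M e.1 e.2 = true} = q := by
  convert hM.transpose.card_zeroRows_add_card_trueEntries using 2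
  exact card_equiv (.prodComm _ _) (by simp)

theorem exists_covering_finset_card_eq {p q n : ℕ} {M : Fin p → Fin q → Bool}
    (σ : Equiv.Perm (Fin n)) {r : Fin p → Fin n} {c : Fin q → Fin n}
    (hr : Function.Injective r) (hc : Function.Injective c)
    (hσ : ∀ i j, M i j = PermMatrix σ (r i) (c j)) :
    ∃ S : Finset (Fin n), #S = q + #{i | ∀ j, M i j = false} ∧
      (∀ i, σ.symm (r i) ∈ S) ∧ ∀ j, c j ∈ S := by
  have hentry : ∀ i j, M i j = true ↔ σ.symm (r i) = c j := by
    simp only [hσ, PermMatrix, decide_eq_true_eq, Equiv.symm_apply_eq]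
    exact fun _ _ => eq_comm
  let Z : Finset (Fin p) := {i | ∀ j, M i j = false}
  refine ⟨univ.image c ∪ Z.image (σ.symm ∘ r), ?_, fun i => ?_, fun j => ?_⟩
  · have hdisj : Disjoint (univ.image c) (Z.image (σ.symm ∘ r)) := by
      simp only [disjoint_left, mem_image, mem_univ, true_and, Function.comp_apply,
        not_exists, not_and, forall_exists_index, forall_apply_eq_imp_iff]
      intro j i hi hij
      simpa [(hentry i j).mpr hij] using (mem_filter.mp hi).2 j
    rw [card_union_of_disjoint hdisj, card_image_of_injective _ hc,
      card_image_of_injective _ (σ.symm.injective.comp hr), card_univ, Fintype.card_fin]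
  · by_cases hi : ∀ j, M i j = false
    · exact mem_union_right _ (mem_image_of_mem _ (mem_filter.mpr ⟨mem_univ i, hi⟩))
    · obtain ⟨j, hj⟩ : ∃ j, M i j = true := by simpa using hi
      exact (hentry i j).mp hj ▸ mem_union_left _ (mem_image_of_mem c (mem_univ j))
  · exact mem_union_left _ (mem_image_of_mem c (mem_univ j))

/-- If `M` is a `p×q` quasi-permutation matrix with exactly `x`
all-false columns and `y` all-false rows, then `p + x = q + y`, and every
minimal permutation containing `M` as a submatrix has size `p + x`. -/
theorem stmt_10 {p q : ℕ} (M : Fin p → Fin q → Bool) (hM : IsQuasiPerm M)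
    (x y : ℕ)
    (hx : x = (Finset.univ.filter (fun j : Fin q => ∀ i : Fin p, M i j = false)).card)
    (hy : y = (Finset.univ.filter (fun i : Fin p => ∀ j : Fin q, M i j = false)).card) :
    p + x = q + y ∧
    ∀ (n : ℕ) (σ : Equiv.Perm (Fin n)),
      IsSubmatrix M (PermMatrix σ) →
      (∀ (k : ℕ) (π : Equiv.Perm (Fin k)), k < n → PermContains σ π →
        ¬ IsSubmatrix M (PermMatrix π)) →
      n = p + x := by
  subst hx hy
  have hrows := hM.card_zeroRows_add_card_trueEntries
  have hcols := hM.card_zeroCols_add_card_trueEntries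
  refine ⟨by omega, ?_⟩
  rintro n σ ⟨r, c, hr, hc, hσ⟩ hmin
  obtain ⟨S, hS, hrS, hcS⟩ := exists_covering_finset_card_eq σ hr.injective hc.injective hσ
  have hle : #S ≤ n := by simpa using card_le_univ S
  have hnlt : ¬ #S < n := fun hlt => hmin _ _ hlt (σ.permContains_patternOn S)
    (σ.isSubmatrix_permMatrix_patternOn S hr hc hσ hrS hcS)
  omega
end

section
/- Let M be a finite set of Boolean quasi-permutation matrices. Then the set of all permutations σ (over all sizes) such that the permutation matrix of σ contains some element of M as a submatrix, while for every permutation π properly contained in σ as a classical pattern (contained in σ and of strictly smaller size) the permutation matrix of π contains no element of M, is finite; equivalently, there is a bound N such that every such σ has size at most N. (In other words: a permutation class described by the avoidance of finitely many submatrices has a finite permutation-basis.) -/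
/-!
If `A` occurs in the matrix of `σ` on rows `r` and columns `c`, keep only the entries of `σ` in
the columns `c` and `σ⁻¹ ∘ r`. The pattern they form has at most `p + q` entries and its matrix
still contains `A`, since its matrix is the submatrix of `σ`'s matrix on the kept rows and columns.
A minimal permutation containing `A` therefore has size at most `p + q`.
-/

open Finset

theorem IsSubmatrix.of_range_subset {p q m n m' n' : ℕ} {A : Fin p → Fin q → Bool}
    {B : Fin m → Fin n → Bool} {B' : Fin m' → Fin n' → Bool} {r₀ : Fin m' → Fin m}
    {c₀ : Fin n' → Fin n} (hr₀ : StrictMono r₀) (hc₀ : StrictMono c₀)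
    (hB' : ∀ i j, B' i j = B (r₀ i) (c₀ j)) {r : Fin p → Fin m} {c : Fin q → Fin n}
    (hr : StrictMono r) (hc : StrictMono c) (hA : ∀ i j, A i j = B (r i) (c j))
    (hrr₀ : ∀ i, r i ∈ Set.range r₀) (hcc₀ : ∀ j, c j ∈ Set.range c₀) :
    IsSubmatrix A B' := by
  choose r' hr' using hrr₀
  choose c' hc' using hcc₀
  refine ⟨r', c', fun a b hab => ?_, fun a b hab => ?_, fun i j => ?_⟩
  · rw [← hr₀.lt_iff_lt, hr', hr']; exact hr hab
  · rw [← hc₀.lt_iff_lt, hc', hc']; exact hc hab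
  · rw [hB', hr', hc', hA]

namespace Equiv.Perm

variable {n : ℕ}

/-- The pattern of `σ` on the columns `s`: the `i`-th element of `s` is sent to the rank of its
image in `σ '' s`. -/
noncomputable def pattern (σ : Perm (Fin n)) (s : Finset (Fin n)) : Perm (Fin #s) :=
  ((s.orderIsoOfFin rfl).toEquiv.trans
      (σ.subtypeEquiv fun _ => (mem_map' σ.toEmbedding).symm)).trans
    ((s.map σ.toEmbedding).orderIsoOfFin (card_map _)).toEquiv.symm

theorem orderEmbOfFin_map_pattern (σ : Perm (Fin n)) (s : Finset (Fin n)) (i : Fin #s) :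
    (s.map σ.toEmbedding).orderEmbOfFin (card_map _) (σ.pattern s i) =
      σ (s.orderEmbOfFin rfl i) := by
  simp [pattern, ← coe_orderIsoOfFin_apply]

theorem permContains_pattern (σ : Perm (Fin n)) (s : Finset (Fin n)) :
    PermContains σ (σ.pattern s) := by
  refine ⟨s.orderEmbOfFin rfl, (s.orderEmbOfFin rfl).strictMono, fun i j => ?_⟩
  rw [← ((s.map σ.toEmbedding).orderEmbOfFin (card_map _)).lt_iff_lt,
    orderEmbOfFin_map_pattern, orderEmbOfFin_map_pattern]

theorem permMatrix_pattern (σ : Perm (Fin n)) (s : Finset (Fin n)) (i j : Fin #s) :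
    PermMatrix (σ.pattern s) i j =
      PermMatrix σ ((s.map σ.toEmbedding).orderEmbOfFin (card_map _) i)
        (s.orderEmbOfFin rfl j) := by
  simp only [PermMatrix, ← orderEmbOfFin_map_pattern,
    ((s.map σ.toEmbedding).orderEmbOfFin (card_map _)).injective.eq_iff]

theorem exists_card_le_isSubmatrix_pattern {p q : ℕ} {A : Fin p → Fin q → Bool}
    {σ : Perm (Fin n)} (hA : IsSubmatrix A (PermMatrix σ)) :
    ∃ s : Finset (Fin n), #s ≤ p + q ∧ IsSubmatrix A (PermMatrix (σ.pattern s)) := by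
  obtain ⟨r, c, hr, hc, hA⟩ := hA
  let s := univ.image (fun i => σ.symm (r i)) ∪ univ.image c
  have hcard : #s ≤ p + q :=
    (card_union_le _ _).trans <| add_le_add
      (card_image_le.trans (card_fin p).le) (card_image_le.trans (card_fin q).le)
  refine ⟨s, hcard, IsSubmatrix.of_range_subset (OrderEmbedding.strictMono _)
    (OrderEmbedding.strictMono _) (permMatrix_pattern σ s) hr hc hA (fun i => ?_) (fun j => ?_)⟩
  · rw [range_orderEmbOfFin, coe_map, Set.mem_image]
    exact ⟨σ.symm (r i), mem_union_left _ (mem_image_of_mem _ (mem_univ i)), σ.apply_symm_apply _⟩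
  · rw [range_orderEmbOfFin]
    exact mem_union_right _ (mem_image_of_mem _ (mem_univ j))

end Equiv.Perm

theorem stmt_11_general {ι : Type*} [Finite ι] (p q : ι → ℕ)
    (M : ∀ i : ι, Fin (p i) → Fin (q i) → Bool) :
    ∃ N : ℕ, ∀ (n : ℕ) (σ : Equiv.Perm (Fin n)),
      (∃ i : ι, IsSubmatrix (M i) (PermMatrix σ)) →
      (∀ (k : ℕ) (π : Equiv.Perm (Fin k)), k < n → PermContains σ π →
        ∀ i : ι, ¬ IsSubmatrix (M i) (PermMatrix π)) →
      n ≤ N := by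
  obtain ⟨N, hN⟩ := Finite.exists_le fun i => p i + q i
  refine ⟨N, fun n σ ⟨i, hσ⟩ hmin => ?_⟩
  obtain ⟨s, hs, hpattern⟩ := σ.exists_card_le_isSubmatrix_pattern hσ
  by_contra! hn
  exact hmin #s (σ.pattern s) ((hs.trans (hN i)).trans_lt hn) (σ.permContains_pattern s) i hpattern

/-- For a finite family `M` of quasi-permutation matrices, the
sizes of the permutations that contain some `M i` as a submatrix, yet all of
whose proper classical patterns avoid every `M i`, are bounded: the
permutation-basis of a class defined by finitely many excluded submatrices is
finite. -/
theorem stmt_11 {ι : Type*} [Finite ι] (p q : ι → ℕ)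
    (M : ∀ i : ι, Fin (p i) → Fin (q i) → Bool) (hM : ∀ i, IsQuasiPerm (M i)) :
    ∃ N : ℕ, ∀ (n : ℕ) (σ : Equiv.Perm (Fin n)),
      (∃ i : ι, IsSubmatrix (M i) (PermMatrix σ)) →
      (∀ (k : ℕ) (π : Equiv.Perm (Fin k)), k < n → PermContains σ π →
        ∀ i : ι, ¬ IsSubmatrix (M i) (PermMatrix π)) →
      n ≤ N :=
  stmt_11_general p q M
end

section
/- A permutation σ (of any size n) contains at least one of the patterns 123, 132, 213 as a classical pattern if and only if the permutation matrix of σ contains as a submatrix the 2×3 Boolean matrix M_F whose row of index 0 is (1,0,0) and whose row of index 1 is (0,0,1). Consequently, the class Av(123,132,213) equals the set of permutations avoiding the single submatrix M_F. -/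
/-- The pattern 123 (0-indexed: the identity). -/
def p123 : Equiv.Perm (Fin 3) := 1

/-- The pattern 132 (0-indexed: 0↦0, 1↦2, 2↦1). -/
def p132 : Equiv.Perm (Fin 3) := Equiv.swap 1 2

/-- The pattern 213 (0-indexed: 0↦1, 1↦0, 2↦2). -/
def p213 : Equiv.Perm (Fin 3) := Equiv.swap 0 1

/-- The matrix `M_F`, with row 0 = (1,0,0) and row 1 = (0,0,1). -/
def MF : Fin 2 → Fin 3 → Bool := ![![true, false, false], ![false, false, true]]

section

variable {n k : ℕ} {σ : Equiv.Perm (Fin n)}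

theorem permContains_of_apply_eq_comp {π : Equiv.Perm (Fin k)} {f h : Fin k → Fin n}
    (hf : StrictMono f) (hh : StrictMono h) (hσ : ∀ a, σ (f a) = h (π a)) :
    PermContains σ π :=
  ⟨f, hf, fun a b => by rw [hσ, hσ, hh.lt_iff_lt]⟩

theorem PermContains.exists_lt_lt_apply_lt {π : Equiv.Perm (Fin k)} (hσπ : PermContains σ π)
    {a b c : Fin k} (hab : a < b) (hbc : b < c) (hπ : π a < π c) :
    ∃ i j l, i < j ∧ j < l ∧ σ i < σ l := by
  obtain ⟨f, hf, hrel⟩ := hσπ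
  exact ⟨f a, f b, f c, hf hab, hf hbc, (hrel a c).mp hπ⟩

theorem permContains_p123_or_p132_or_p213 {i j l : Fin n} (hij : i < j) (hjl : j < l)
    (hσ : σ i < σ l) :
    PermContains σ p123 ∨ PermContains σ p132 ∨ PermContains σ p213 := by
  have hf : StrictMono ![i, j, l] := by simp [hij, hjl]
  have hσji : σ j ≠ σ i := fun e => hij.ne' (σ.injective e)
  have hσjl : σ j ≠ σ l := fun e => hjl.ne (σ.injective e)
  rcases hσji.lt_or_gt with hσji | hσij
  · refine .inr <| .inr <| permContains_of_apply_eq_comp (h := ![σ j, σ i, σ l]) hf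
      (by simp [hσji, hσ]) fun a => ?_
    fin_cases a <;> rfl
  rcases hσjl.lt_or_gt with hσjl | hσlj
  · refine .inl <| permContains_of_apply_eq_comp (h := ![σ i, σ j, σ l]) hf
      (by simp [hσij, hσjl]) fun a => ?_
    fin_cases a <;> rfl
  · refine .inr <| .inl <| permContains_of_apply_eq_comp (h := ![σ i, σ l, σ j]) hf
      (by simp [hσ, hσlj]) fun a => ?_
    fin_cases a <;> rfl

theorem isSubmatrix_MF_permMatrix_iff :
    IsSubmatrix MF (PermMatrix σ) ↔ ∃ i j l, i < j ∧ j < l ∧ σ i < σ l := by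
  constructor
  · rintro ⟨r, c, hr, hc, hM⟩
    have h0 : σ (c 0) = r 0 := by simpa [MF, PermMatrix] using hM 0 0
    have h2 : σ (c 2) = r 1 := by simpa [MF, PermMatrix] using hM 1 2
    exact ⟨c 0, c 1, c 2, hc (by decide), hc (by decide), h0 ▸ h2 ▸ hr (by decide)⟩
  · rintro ⟨i, j, l, hij, hjl, hσ⟩
    have hσji : σ j ≠ σ i := fun e => hij.ne' (σ.injective e)
    have hσjl : σ j ≠ σ l := fun e => hjl.ne (σ.injective e)
    refine ⟨![σ i, σ l], ![i, j, l], by simp [hσ], by simp [hij, hjl], fun a b => ?_⟩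
    fin_cases a <;> fin_cases b <;> simp [MF, PermMatrix, hσji, hσjl, hσ.ne, hσ.ne']

end

/-- A permutation contains 123, 132 or 213 as a classical
pattern iff its permutation matrix contains `M_F` as a submatrix; hence
`Av(123,132,213) = Av(M_F)`. -/
theorem stmt_13 (n : ℕ) (σ : Equiv.Perm (Fin n)) :
    (PermContains σ p123 ∨ PermContains σ p132 ∨ PermContains σ p213) ↔
      IsSubmatrix MF (PermMatrix σ) := by
  rw [isSubmatrix_MF_permMatrix_iff]
  constructor
  · rintro (h | h | h) <;> exact h.exists_lt_lt_apply_lt (a := 0) (b := 1) (c := 2)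
      (by decide) (by decide) (by decide)
  · rintro ⟨i, j, l, hij, hjl, hσ⟩
    exact permContains_p123_or_p132_or_p213 hij hjl hσ
end

section
/- Let τ be a permutation of size k and let M_{τ,top} be the (k+1)×k Boolean matrix obtained from the permutation matrix of τ by appending an all-false row of index k (above all rows of M_τ). Then for every permutation σ of size n ≥ 1: the permutation matrix of σ contains M_{τ,top} as a submatrix if and only if there is an occurrence of τ in σ (a strictly increasing f : Fin k → Fin n with τ(i) < τ(j) ⟺ σ(f(i)) < σ(f(j))) none of whose positions f(i) carries the maximum value of σ. Equivalently, σ avoids M_{τ,top} if and only if every occurrence of τ in σ involves the position of the maximum value of σ; that is, the permutations avoiding M_{τ,top} are exactly the permutations avoiding τ to which a maximal element has been added. -/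
/-- `M_{τ,top}`: the `(k+1)×k` matrix obtained from the permutation matrix of
`τ` by appending an all-false row of index `k` (above all rows). -/
def MTop {k : ℕ} (τ : Equiv.Perm (Fin k)) : Fin (k + 1) → Fin k → Bool :=
  fun i j => decide (((τ j : ℕ)) = (i : ℕ))

/-!
An embedding `(r, c)` of `M_{τ,top}` into `M_σ` is the same as an occurrence `c` of `τ` in `σ`
whose values `σ (c j) = r (τ j)` all lie strictly below the extra row `r k`, hence below the
maximum value `n - 1`. Conversely, an occurrence avoiding the maximum extends to an embedding by
sending the extra row to row `n - 1`, which then meets no selected column.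
-/

lemma Fin.strictMono_lastCases {α : Type*} [Preorder α] {k : ℕ} {g : Fin k → α} {x : α}
    (hg : StrictMono g) (hx : ∀ i, g i < x) :
    StrictMono (Fin.lastCases x g : Fin (k + 1) → α) := by
  intro a b hab
  induction b using Fin.lastCases with
  | last =>
    induction a using Fin.lastCases with
    | last => exact absurd hab (lt_irrefl _)
    | cast i => simpa using hx i
  | cast j =>
    induction a using Fin.lastCases with
    | last => exact absurd hab (not_lt.2 (Fin.le_last _))
    | cast i => simpa using hg (Fin.castSucc_lt_castSucc_iff.1 hab)

section

variable {k n : ℕ} (τ : Equiv.Perm (Fin k)) (σ : Equiv.Perm (Fin n))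

lemma permMatrix_eq_true_iff (i j : Fin n) : PermMatrix σ i j = true ↔ σ j = i :=
  decide_eq_true_iff

lemma mTop_castSucc (i j : Fin k) : MTop τ i.castSucc j = decide (τ j = i) := by
  simp [MTop, Fin.ext_iff]

lemma mTop_last (j : Fin k) : MTop τ (Fin.last k) j = false := by
  simpa [MTop] using (τ j).isLt.ne

lemma apply_eq_of_mTop_eq_permMatrix {r : Fin (k + 1) → Fin n} {c : Fin k → Fin n}
    (h : ∀ i j, MTop τ i j = PermMatrix σ (r i) (c j)) (j : Fin k) :
    σ (c j) = r (τ j).castSucc := by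
  rw [← permMatrix_eq_true_iff, ← h, mTop_castSucc, decide_eq_true rfl]

lemma exists_occurrence_of_isSubmatrix_mTop (h : IsSubmatrix (MTop τ) (PermMatrix σ)) :
    ∃ f : Fin k → Fin n, StrictMono f ∧
      (∀ i j, τ i < τ j ↔ σ (f i) < σ (f j)) ∧ ∀ i, (σ (f i) : ℕ) ≠ n - 1 := by
  obtain ⟨r, c, hr, hc, hrc⟩ := h
  have hσc := apply_eq_of_mTop_eq_permMatrix τ σ hrc
  refine ⟨c, hc, fun i j => ?_, fun i => ?_⟩
  · rw [hσc, hσc, hr.lt_iff_lt, Fin.castSucc_lt_castSucc_iff]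
  · have hbelow : σ (c i) < r (Fin.last k) := hσc i ▸ hr (Fin.castSucc_lt_last _)
    have := (r (Fin.last k)).isLt
    rw [Fin.lt_def] at hbelow
    omega

lemma isSubmatrix_mTop_of_occurrence (hn : 1 ≤ n) {f : Fin k → Fin n} (hf : StrictMono f)
    (hpat : ∀ i j, τ i < τ j ↔ σ (f i) < σ (f j))
    (hmax : ∀ i, (σ (f i) : ℕ) ≠ n - 1) :
    IsSubmatrix (MTop τ) (PermMatrix σ) := by
  let top : Fin n := ⟨n - 1, by omega⟩
  let g : Fin k → Fin n := fun i => σ (f (τ.symm i))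
  have hg : StrictMono g := fun i j hij => by
    simpa only [g, ← hpat, Equiv.apply_symm_apply] using hij
  have hg_top : ∀ i, g i < top := fun i => by
    rw [Fin.lt_def]
    exact Nat.lt_of_le_of_ne (Nat.le_sub_one_of_lt (g i).isLt) (hmax (τ.symm i))
  refine ⟨Fin.lastCases top g, f, Fin.strictMono_lastCases hg hg_top, hf, fun i j => ?_⟩
  induction i using Fin.lastCases with
  | last =>
    dsimp only
    rw [Fin.lastCases_last, mTop_last, eq_comm, Bool.eq_false_iff, Ne, permMatrix_eq_true_iff,
      Fin.ext_iff]
    exact hmax j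
  | cast i =>
    dsimp only
    rw [Fin.lastCases_castSucc, mTop_castSucc, PermMatrix, decide_eq_decide, σ.injective.eq_iff,
      hf.injective.eq_iff, Equiv.eq_symm_apply]

end

/-- The permutation matrix of `σ` contains `M_{τ,top}` as a
submatrix iff `σ` has an occurrence of `τ` none of whose positions carries the
maximum value of `σ`. -/
theorem stmt_16 {k : ℕ} (τ : Equiv.Perm (Fin k)) (n : ℕ) (hn : 1 ≤ n)
    (σ : Equiv.Perm (Fin n)) :
    IsSubmatrix (MTop τ) (PermMatrix σ) ↔
      ∃ f : Fin k → Fin n, StrictMono f ∧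
        (∀ i j, τ i < τ j ↔ σ (f i) < σ (f j)) ∧
        ∀ i, ((σ (f i) : ℕ)) ≠ n - 1 :=
  ⟨exists_occurrence_of_isSubmatrix_mTop τ σ,
    fun ⟨_, hf, hpat, hmax⟩ => isSubmatrix_mTop_of_occurrence τ σ hn hf hpat hmax⟩
end

section
/- Let B be a set of permutations. For each τ ∈ B of size k, let M_{τ,top} be the (k+1)×k Boolean matrix obtained from the permutation matrix of τ by appending an all-false row of index k. Then for every n ≥ 1, the number of permutations σ of size n whose permutation matrix contains no M_{τ,top} (τ ∈ B) as a submatrix equals n times the number of permutations of size n−1 that avoid every τ ∈ B as a classical pattern. -/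
theorem Fin.strictMono_snoc {α : Type*} [Preorder α] {n : ℕ} {f : Fin n → α}
    (hf : StrictMono f) {x : α} (hx : ∀ i, f i < x) :
    StrictMono (Fin.snoc f x : Fin (n + 1) → α) := by
  intro a b hab
  induction b using Fin.lastCases with
  | last =>
    induction a using Fin.lastCases with
    | last => exact absurd hab (lt_irrefl _)
    | cast a => simpa using hx a
  | cast b =>
    induction a using Fin.lastCases with
    | last => exact absurd hab (Fin.castSucc_lt_last b).not_gt
    | cast a => simpa using hf (Fin.castSucc_lt_castSucc_iff.mp hab)

namespace Equiv.Perm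

variable {m k : ℕ}

/-- Conjugating by `finSuccEquiv'` identifies the position and the value of the maximum of `σ`
with `none`; removing `none` leaves the pattern of the other entries. -/
noncomputable def eraseMax (σ : Perm (Fin (m + 1))) : Perm (Fin m) :=
  removeNone (((finSuccEquiv' (σ.symm (Fin.last m))).symm.trans σ).trans
    (finSuccEquiv' (Fin.last m)))

theorem castSucc_eraseMax_apply (σ : Perm (Fin (m + 1))) (j : Fin m) :
    (σ.eraseMax j).castSucc = σ ((σ.symm (Fin.last m)).succAbove j) := by
  have hne : σ ((σ.symm (Fin.last m)).succAbove j) ≠ Fin.last m := by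
    simpa using σ.injective.ne (Fin.succAbove_ne (σ.symm (Fin.last m)) j)
  obtain ⟨y, hy⟩ := Fin.exists_castSucc_eq.mpr hne
  have hsome : (((finSuccEquiv' (σ.symm (Fin.last m))).symm.trans σ).trans
      (finSuccEquiv' (Fin.last m))) (some j) = some y := by
    simp [← hy, finSuccEquiv'_last_apply_castSucc]
  rw [← hy, Fin.castSucc_inj, ← Option.some_inj]
  exact (removeNone_some _ ⟨y, hsome⟩).trans hsome

theorem isSubmatrix_mTop_iff {n : ℕ} (τ : Perm (Fin k)) (σ : Perm (Fin n)) :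
    IsSubmatrix (MTop τ) (PermMatrix σ) ↔
      ∃ c : Fin k → Fin n, StrictMono c ∧ (∀ i j, τ i < τ j ↔ σ (c i) < σ (c j)) ∧
        ∃ v, ∀ j, σ (c j) < v := by
  constructor
  · rintro ⟨r, c, hr, hc, hrc⟩
    have hval (j : Fin k) : σ (c j) = r (τ j).castSucc := by
      simpa [MTop, PermMatrix] using (hrc (τ j).castSucc j).symm
    refine ⟨c, hc, fun a b => ?_, r (Fin.last k), fun j => ?_⟩
    · rw [hval, hval, hr.lt_iff_lt, Fin.castSucc_lt_castSucc_iff]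
    · rw [hval]
      exact hr (Fin.castSucc_lt_last _)
  · rintro ⟨c, hc, hpat, v, hv⟩
    have hrows : StrictMono fun i => σ (c (τ.symm i)) := fun a b hab => by
      rwa [← hpat, apply_symm_apply, apply_symm_apply]
    refine ⟨Fin.snoc (fun i => σ (c (τ.symm i))) v, c, Fin.strictMono_snoc hrows fun _ => hv _,
      hc, fun i j => ?_⟩
    induction i using Fin.lastCases with
    | last => simp [MTop, PermMatrix, (hv j).ne, (τ j).isLt.ne]
    | cast i => simp [MTop, PermMatrix, hc.injective.eq_iff, eq_symm_apply, Fin.val_inj]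

theorem permContains_eraseMax_iff (σ : Perm (Fin (m + 1))) (τ : Perm (Fin k)) :
    PermContains σ.eraseMax τ ↔
      ∃ c : Fin k → Fin (m + 1), StrictMono c ∧ (∀ i j, τ i < τ j ↔ σ (c i) < σ (c j)) ∧
        ∀ j, σ (c j) ≠ Fin.last m := by
  set p := σ.symm (Fin.last m)
  constructor
  · rintro ⟨f, hf, hpat⟩
    refine ⟨fun j => p.succAbove (f j), (Fin.strictMono_succAbove p).comp hf, fun a b => ?_,
      fun j => ?_⟩
    · rw [hpat, ← Fin.castSucc_lt_castSucc_iff, castSucc_eraseMax_apply, castSucc_eraseMax_apply]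
    · rw [← castSucc_eraseMax_apply]
      exact Fin.castSucc_ne_last _
  · rintro ⟨c, hc, hpat, hne⟩
    have hcp (j : Fin k) : c j ≠ p := fun h => hne j (by rw [h, apply_symm_apply])
    choose f hf using fun j => Fin.exists_succAbove_eq (hcp j)
    refine ⟨f, fun a b hab => ?_, fun a b => ?_⟩
    · rw [← Fin.succAbove_lt_succAbove_iff (p := p), hf, hf]
      exact hc hab
    · rw [hpat, ← hf a, ← hf b, ← castSucc_eraseMax_apply, ← castSucc_eraseMax_apply,
        Fin.castSucc_lt_castSucc_iff]

theorem isSubmatrix_mTop_iff_permContains_eraseMax (τ : Perm (Fin k)) (σ : Perm (Fin (m + 1))) :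
    IsSubmatrix (MTop τ) (PermMatrix σ) ↔ PermContains σ.eraseMax τ := by
  rw [isSubmatrix_mTop_iff, permContains_eraseMax_iff]
  refine exists_congr fun c => and_congr_right fun _ => and_congr_right fun _ => ?_
  exact ⟨fun ⟨v, hv⟩ j => ((hv j).trans_le (Fin.le_last v)).ne,
    fun h => ⟨Fin.last m, fun j => Fin.lt_last_iff_ne_last.mpr (h j)⟩⟩

theorem bijective_symm_last_eraseMax :
    Function.Bijective fun σ : Perm (Fin (m + 1)) => (σ.symm (Fin.last m), σ.eraseMax) := by
  rw [Nat.bijective_iff_injective_and_card]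
  refine ⟨fun σ σ' h => Equiv.ext fun x => ?_, ?_⟩
  · obtain ⟨hp, he⟩ := Prod.ext_iff.mp h
    dsimp only at hp he
    rcases eq_or_ne x (σ.symm (Fin.last m)) with rfl | hx
    · rw [apply_symm_apply, hp, apply_symm_apply]
    · obtain ⟨j, rfl⟩ := Fin.exists_succAbove_eq hx
      have := congrArg (fun π : Perm (Fin m) => (π j).castSucc) he
      simp only [castSucc_eraseMax_apply] at this
      rwa [← hp] at this
  · simp only [Nat.card_perm, Nat.card_prod, Nat.card_fin, Nat.factorial_succ]

theorem card_subtype_eraseMax (P : Perm (Fin m) → Prop) :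
    Nat.card {σ : Perm (Fin (m + 1)) // P σ.eraseMax} = (m + 1) * Nat.card {π // P π} := by
  let e : {σ : Perm (Fin (m + 1)) // P σ.eraseMax} ≃ Fin (m + 1) × {π // P π} :=
    ((Equiv.ofBijective _ bijective_symm_last_eraseMax).subtypeEquiv
        (q := fun x => P x.2) fun _ => Iff.rfl).trans
      { toFun x := (x.1.1, ⟨x.1.2, x.2⟩)
        invFun y := ⟨(y.1, y.2.1), y.2.2⟩ }
  rw [Nat.card_congr e, Nat.card_prod, Nat.card_fin]

end Equiv.Perm

open Equiv.Perm in
/-- For a set `B = {τ i}` of permutations and every `n ≥ 1`, the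
number of permutations of size `n` avoiding every `M_{τ,top}` as a submatrix is
`n` times the number of permutations of size `n−1` avoiding every `τ` as a
classical pattern. -/
theorem stmt_17 {ι : Type*} (k : ι → ℕ) (τ : ∀ i : ι, Equiv.Perm (Fin (k i)))
    (n : ℕ) (hn : 1 ≤ n) :
    Nat.card {σ : Equiv.Perm (Fin n) //
        ∀ i : ι, ¬ IsSubmatrix (MTop (τ i)) (PermMatrix σ)} =
      n * Nat.card {π : Equiv.Perm (Fin (n - 1)) // ∀ i : ι, ¬ PermContains π (τ i)} := by
  obtain ⟨m, rfl⟩ : ∃ m, n = m + 1 := ⟨n - 1, by omega⟩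
  simp only [isSubmatrix_mTop_iff_permContains_eraseMax]
  exact card_subtype_eraseMax fun π => ∀ i, ¬ PermContains π (τ i)
end

section
/- Let A be an m×n Boolean matrix. Then A is uniquely determined among m×n Boolean matrices by its horizontal and vertical projections — i.e., every m×n Boolean matrix B having, for each row, the same number of true entries as the corresponding row of A, and, for each column, the same number of true entries as the corresponding column of A, equals A — if and only if there exist no indices i₁ < i₂ and j₁ < j₂ such that either (A(i₁,j₁) and A(i₂,j₂) are true while A(i₁,j₂) and A(i₂,j₁) are false) or (A(i₁,j₂) and A(i₂,j₁) are true while A(i₁,j₁) and A(i₂,j₂) are false); equivalently, A contains neither S₁ = [[1,0],[0,1]] nor S₂ = [[0,1],[1,0]] as a 2×2 submatrix. -/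
/-!
If `A` contains `S₁` or `S₂`, negating those four entries (an interchange) keeps every row and
column count, since in each affected line it just swaps a `1` with a `0`. Conversely, suppose
`A` has no such submatrix; then the row supports of `A` are nested. If `B ≠ A` has the same
projections, pick a row `i` where they differ: equal counts give a column `j` with
`A i j = 1`, `B i j = 0`, and the count of column `j` gives a row `i'` with `B i' j = 1`,
`A i' j = 0`. Nestedness forces the support of row `i'` of `A` strictly inside that of row `i`,
so the rows where `A` and `B` differ have no row of minimal count.
-/

/-- The horizontal projection: number of true entries in row `i`. -/
def rowCount {m n : ℕ} (A : Fin m → Fin n → Bool) (i : Fin m) : ℕ :=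
  (Finset.univ.filter (fun j : Fin n => A i j = true)).card

/-- The vertical projection: number of true entries in column `j`. -/
def colCount {m n : ℕ} (A : Fin m → Fin n → Bool) (j : Fin n) : ℕ :=
  (Finset.univ.filter (fun i : Fin m => A i j = true)).card

section BoolFunctions

variable {α : Type*} [Fintype α]

/-- Negating two entries with opposite values amounts to swapping them. -/
lemma card_filter_flip_pair [DecidableEq α] (a : α → Bool) {x y : α} (h : a x ≠ a y) :
    (Finset.univ.filter (fun z => (if z = x ∨ z = y then !a z else a z) = true)).card =
      (Finset.univ.filter (fun z => a z = true)).card := by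
  have hswap : ∀ z, (if z = x ∨ z = y then !a z else a z) = a (Equiv.swap x y z) := by
    intro z
    by_cases hx : z = x
    · subst hx; cases hax : a z <;> cases hay : a y <;> simp_all
    by_cases hy : z = y
    · subst hy; cases hax : a x <;> cases hay : a z <;> simp_all
    simp [hx, hy, Equiv.swap_apply_of_ne_of_ne hx hy]
  exact Finset.card_equiv (Equiv.swap x y) (by simp [hswap])

lemma exists_true_false_of_card_filter_eq {a b : α → Bool}
    (hcard : (Finset.univ.filter (fun z => a z = true)).card =
      (Finset.univ.filter (fun z => b z = true)).card)
    (hne : a ≠ b) : ∃ z, a z = true ∧ b z = false := by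
  by_contra! h
  have hsub : Finset.univ.filter (fun z => a z = true) ⊆
      Finset.univ.filter (fun z => b z = true) := by
    intro z hz
    simp only [Finset.mem_filter, Finset.mem_univ, true_and] at hz ⊢
    simpa using h z hz
  have hfilter := Finset.eq_of_subset_of_card_le hsub hcard.ge
  exact hne (funext fun z => Bool.eq_iff_iff.mpr (by simpa using Finset.ext_iff.mp hfilter z))

end BoolFunctions

section Interchange

variable {m n : ℕ}

/-- The indices are unordered: `S₂` in columns `j₁ < j₂` is `S₁` in columns `j₂, j₁`. -/
def HasInterchange (A : Fin m → Fin n → Bool) : Prop :=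
  ∃ i₁ i₂ j₁ j₂, A i₁ j₁ = true ∧ A i₂ j₂ = true ∧ A i₁ j₂ = false ∧ A i₂ j₁ = false

/-- On an occurrence of `S₁` or `S₂` this turns one into the other. -/
def interchange (A : Fin m → Fin n → Bool) (i₁ i₂ : Fin m) (j₁ j₂ : Fin n) :
    Fin m → Fin n → Bool :=
  fun i j => if (i = i₁ ∨ i = i₂) ∧ (j = j₁ ∨ j = j₂) then !A i j else A i j

lemma interchange_transpose (A : Fin m → Fin n → Bool) (i₁ i₂ : Fin m) (j₁ j₂ : Fin n) :
    interchange (fun j i => A i j) j₁ j₂ i₁ i₂ = fun j i => interchange A i₁ i₂ j₁ j₂ i j := by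
  funext j i
  simp only [interchange, and_comm]

lemma rowCount_interchange (A : Fin m → Fin n → Bool) {i₁ i₂ : Fin m} {j₁ j₂ : Fin n}
    (h₁ : A i₁ j₁ ≠ A i₁ j₂) (h₂ : A i₂ j₁ ≠ A i₂ j₂) (i : Fin m) :
    rowCount (interchange A i₁ i₂ j₁ j₂) i = rowCount A i := by
  unfold rowCount interchange
  by_cases hi : i = i₁ ∨ i = i₂
  · simp only [hi, true_and]
    refine card_filter_flip_pair (A i) ?_
    rcases hi with rfl | rfl <;> assumption
  · simp only [hi, false_and, if_false]

lemma colCount_interchange (A : Fin m → Fin n → Bool) {i₁ i₂ : Fin m} {j₁ j₂ : Fin n}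
    (h₁ : A i₁ j₁ ≠ A i₂ j₁) (h₂ : A i₁ j₂ ≠ A i₂ j₂) (j : Fin n) :
    colCount (interchange A i₁ i₂ j₁ j₂) j = colCount A j := by
  have := rowCount_interchange (fun j i => A i j) h₁ h₂ j
  rwa [interchange_transpose] at this

lemma interchange_ne (A : Fin m → Fin n → Bool) (i₁ i₂ : Fin m) (j₁ j₂ : Fin n) :
    interchange A i₁ i₂ j₁ j₂ ≠ A := fun h => by
  simpa [interchange] using congrFun (congrFun h i₁) j₁

lemma HasInterchange.exists_ne_projections_eq {A : Fin m → Fin n → Bool}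
    (hA : HasInterchange A) :
    ∃ B ≠ A, (∀ i, rowCount B i = rowCount A i) ∧ ∀ j, colCount B j = colCount A j := by
  obtain ⟨i₁, i₂, j₁, j₂, h₁₁, h₂₂, h₁₂, h₂₁⟩ := hA
  refine ⟨interchange A i₁ i₂ j₁ j₂, interchange_ne A i₁ i₂ j₁ j₂,
    rowCount_interchange A ?_ ?_, colCount_interchange A ?_ ?_⟩ <;> simp_all

/-- Without an interchange the supports of the rows are nested. -/
lemma rowCount_lt_of_not_hasInterchange {A : Fin m → Fin n → Bool} (hA : ¬HasInterchange A)
    {i i' : Fin m} {j : Fin n} (hij : A i j = true) (hi'j : A i' j = false) :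
    rowCount A i' < rowCount A i := by
  refine Finset.card_lt_card ⟨fun j' hj' => ?_, fun hsup => ?_⟩
  · simp only [Finset.mem_filter, Finset.mem_univ, true_and] at hj' ⊢
    by_contra hij'
    exact hA ⟨i, i', j, j', hij, hj', by simpa using hij', hi'j⟩
  · exact absurd (Finset.mem_filter.mp (hsup (by simpa using hij))).2 (by simp [hi'j])

lemma exists_rowCount_lt_of_projections_eq {A B : Fin m → Fin n → Bool}
    (hA : ¬HasInterchange A) (hrow : ∀ i, rowCount B i = rowCount A i)
    (hcol : ∀ j, colCount B j = colCount A j) {i : Fin m} (hi : B i ≠ A i) :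
    ∃ i', B i' ≠ A i' ∧ rowCount A i' < rowCount A i := by
  obtain ⟨j, hAij, hBij⟩ := exists_true_false_of_card_filter_eq (hrow i).symm hi.symm
  obtain ⟨i', hBi'j, hAi'j⟩ := exists_true_false_of_card_filter_eq
    (a := fun i => B i j) (b := fun i => A i j) (hcol j)
    (fun h => by simpa [hAij, hBij] using congrFun h i)
  exact ⟨i', fun h => by simp [h, hAi'j] at hBi'j, rowCount_lt_of_not_hasInterchange hA hAij hAi'j⟩

lemma eq_of_projections_eq {A : Fin m → Fin n → Bool} (hA : ¬HasInterchange A)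
    (B : Fin m → Fin n → Bool) (hrow : ∀ i, rowCount B i = rowCount A i)
    (hcol : ∀ j, colCount B j = colCount A j) : B = A := by
  funext i
  induction i using (measure (rowCount A)).wf.induction with
  | h i ih =>
    by_contra hi
    obtain ⟨i', hi', hlt⟩ := exists_rowCount_lt_of_projections_eq hA hrow hcol hi
    exact hi' (ih i' hlt)

lemma hasInterchange_iff (A : Fin m → Fin n → Bool) :
    HasInterchange A ↔ ∃ (i₁ i₂ : Fin m) (j₁ j₂ : Fin n), i₁ < i₂ ∧ j₁ < j₂ ∧
        ((A i₁ j₁ = true ∧ A i₂ j₂ = true ∧ A i₁ j₂ = false ∧ A i₂ j₁ = false) ∨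
         (A i₁ j₂ = true ∧ A i₂ j₁ = true ∧ A i₁ j₁ = false ∧ A i₂ j₂ = false)) := by
  constructor
  · rintro ⟨i₁, i₂, j₁, j₂, h₁₁, h₂₂, h₁₂, h₂₁⟩
    have hi : i₁ ≠ i₂ := by rintro rfl; simp_all
    have hj : j₁ ≠ j₂ := by rintro rfl; simp_all
    rcases hi.lt_or_gt with hi | hi <;> rcases hj.lt_or_gt with hj | hj
    · exact ⟨i₁, i₂, j₁, j₂, hi, hj, .inl ⟨h₁₁, h₂₂, h₁₂, h₂₁⟩⟩
    · exact ⟨i₁, i₂, j₂, j₁, hi, hj, .inr ⟨h₁₁, h₂₂, h₁₂, h₂₁⟩⟩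
    · exact ⟨i₂, i₁, j₁, j₂, hi, hj, .inr ⟨h₂₂, h₁₁, h₂₁, h₁₂⟩⟩
    · exact ⟨i₂, i₁, j₂, j₁, hi, hj, .inl ⟨h₂₂, h₁₁, h₂₁, h₁₂⟩⟩
  · rintro ⟨i₁, i₂, j₁, j₂, -, -, ⟨h₁, h₂, h₃, h₄⟩ | ⟨h₁, h₂, h₃, h₄⟩⟩
    exacts [⟨i₁, i₂, j₁, j₂, h₁, h₂, h₃, h₄⟩, ⟨i₁, i₂, j₂, j₁, h₁, h₂, h₃, h₄⟩]

end Interchange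

/-- Ryser: an `m×n` Boolean matrix `A` is uniquely determined by
its horizontal and vertical projections iff it contains no 2×2 submatrix equal
to `S₁ = [[1,0],[0,1]]` or `S₂ = [[0,1],[1,0]]`. -/
theorem stmt_18 {m n : ℕ} (A : Fin m → Fin n → Bool) :
    (∀ B : Fin m → Fin n → Bool,
        (∀ i, rowCount B i = rowCount A i) → (∀ j, colCount B j = colCount A j) →
        B = A) ↔
      ¬ ∃ (i₁ i₂ : Fin m) (j₁ j₂ : Fin n), i₁ < i₂ ∧ j₁ < j₂ ∧
        ((A i₁ j₁ = true ∧ A i₂ j₂ = true ∧ A i₁ j₂ = false ∧ A i₂ j₁ = false) ∨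
         (A i₁ j₂ = true ∧ A i₂ j₁ = true ∧ A i₁ j₁ = false ∧ A i₂ j₂ = false)) := by
  rw [← hasInterchange_iff]
  refine ⟨fun hunique hA => ?_, eq_of_projections_eq⟩
  obtain ⟨B, hne, hrow, hcol⟩ := hA.exists_ne_projections_eq
  exact hne (hunique B hrow hcol)
end

section
/- Let M be the 2×4 Boolean matrix whose row of index 0 is (1,1,0,1) and whose row of index 1 is (1,0,0,1) (rows numbered bottom-to-top). Then there are infinitely many polyominoes Q such that M is a submatrix of Q and every proper polyomino submatrix of Q (a submatrix of Q that is itself a polyomino and has strictly fewer rows or strictly fewer columns than Q) does not contain M as a submatrix. Concretely: for every natural number N there exists such a polyomino Q whose number of rows plus number of columns exceeds N. (Hence the polyomino class Av_P(M) has an infinite polyomino-basis.) -/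
/-- Two cells are 4-adjacent: they agree in one coordinate and differ by
exactly 1 in the other. -/
def CellAdj {m n : ℕ} (c d : Fin m × Fin n) : Prop :=
  ((c.1 : ℕ) = (d.1 : ℕ) ∧ ((c.2 : ℕ) + 1 = (d.2 : ℕ) ∨ (d.2 : ℕ) + 1 = (c.2 : ℕ))) ∨
  ((c.2 : ℕ) = (d.2 : ℕ) ∧ ((c.1 : ℕ) + 1 = (d.1 : ℕ) ∨ (d.1 : ℕ) + 1 = (c.1 : ℕ)))

/-- One step between true cells of `P`. -/
def CellStep {m n : ℕ} (P : Fin m → Fin n → Bool) (c d : Fin m × Fin n) : Prop :=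
  P c.1 c.2 = true ∧ P d.1 d.2 = true ∧ CellAdj c d

/-- `P` is a polyomino: nonempty, 4-connected set of true cells, touching all
four sides of its bounding rectangle. -/
def IsPolyomino {m n : ℕ} (P : Fin m → Fin n → Bool) : Prop :=
  0 < m ∧ 0 < n ∧
  (∃ i j, P i j = true) ∧
  (∀ c d : Fin m × Fin n, P c.1 c.2 = true → P d.1 d.2 = true →
    Relation.ReflTransGen (CellStep P) c d) ∧
  (∃ (i : Fin m) (j : Fin n), (i : ℕ) = 0 ∧ P i j = true) ∧
  (∃ (i : Fin m) (j : Fin n), (i : ℕ) = m - 1 ∧ P i j = true) ∧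
  (∃ (i : Fin m) (j : Fin n), (j : ℕ) = 0 ∧ P i j = true) ∧
  (∃ (i : Fin m) (j : Fin n), (j : ℕ) = n - 1 ∧ P i j = true)

/-- The matrix `M` with row 0 = (1,1,0,1) and row 1 = (1,0,0,1)
(rows numbered bottom-to-top). -/
def M19 : Fin 2 → Fin 4 → Bool :=
  ![![true, true, false, true], ![true, false, false, true]]

/-!
The polyominoes are `Q_m = stair m` (`m` rows, `m + 1` columns): a full column `0`, the cells
`(0, 1)` and `(m - 1, 1)`, and a staircase of vertical dominoes `{(m - j, j), (m + 1 - j, j)}`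
for `2 ≤ j ≤ m`. The pattern `M19` occurs in `Q_m` only in rows `0, 1` and columns `0, 1, g, m`
with `2 ≤ g ≤ m - 2`. Take a polyomino submatrix `A` of `Q_m` containing such an occurrence.
If `A` missed a column `j₀`, no step of `A` could cross `j₀`: in `Q_m` the only row-neighbours
of `A` on both sides of `j₀` also have column `1` or `g` between them. So `A` would not connect
its cells in columns `1` and `m`. Hence `A` keeps all columns, and then it keeps all rows: a
missing row `i₀ ≥ 2` cannot be crossed in columns `≥ 2`, where the cells of a column are
consecutive rows, and the path from column `1` to column `2` lies in row `m - 1 > i₀`; so `A`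
would not connect its cells `(0, 0)` and `(0, m)`.
-/

open Relation

section Polyomino

variable {m n : ℕ} {P : Fin m → Fin n → Bool}

instance : Std.Symm (CellStep P) where
  symm _ _ h := ⟨h.2.1, h.1, by have := h.2.2; unfold CellAdj at this ⊢; omega⟩

theorem isPolyomino_of_forall_reflTransGen (o : Fin m × Fin n)
    (ho : ∀ c : Fin m × Fin n, P c.1 c.2 = true → ReflTransGen (CellStep P) c o)
    (hbot : ∃ (i : Fin m) (j : Fin n), (i : ℕ) = 0 ∧ P i j = true)
    (htop : ∃ (i : Fin m) (j : Fin n), (i : ℕ) = m - 1 ∧ P i j = true)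
    (hleft : ∃ (i : Fin m) (j : Fin n), (j : ℕ) = 0 ∧ P i j = true)
    (hright : ∃ (i : Fin m) (j : Fin n), (j : ℕ) = n - 1 ∧ P i j = true) :
    IsPolyomino P := by
  obtain ⟨i, j, -, hij⟩ := id hbot
  exact ⟨o.1.pos, o.2.pos, ⟨i, j, hij⟩,
    fun c d hc hd => (ho c hc).trans (Std.Symm.symm _ _ (ho d hd)), hbot, htop, hleft, hright⟩

theorem iff_of_reflTransGen_cellStep (f : Fin m × Fin n → Prop)
    (hrow : ∀ i (x y : Fin n), (y : ℕ) = x + 1 → P i x = true → P i y = true →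
      (f (i, x) ↔ f (i, y)))
    (hcol : ∀ (i i' : Fin m) x, (i' : ℕ) = i + 1 → P i x = true → P i' x = true →
      (f (i, x) ↔ f (i', x)))
    {u v : Fin m × Fin n} (huv : ReflTransGen (CellStep P) u v) : f u ↔ f v := by
  induction huv with
  | refl => rfl
  | @tail b d _ hbd ih =>
    refine ih.trans ?_
    obtain ⟨i, x⟩ := b
    obtain ⟨i', y⟩ := d
    obtain ⟨hb, hd, ⟨hi, hxy | hxy⟩ | ⟨hx, hii' | hii'⟩⟩ := hbd
    all_goals dsimp only at *
    · obtain rfl : i = i' := Fin.ext hi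
      exact hrow i x y hxy.symm hb hd
    · obtain rfl : i = i' := Fin.ext hi
      exact (hrow i y x hxy.symm hd hb).symm
    · obtain rfl : x = y := Fin.ext hx
      exact hcol i i' x hii'.symm hb hd
    · obtain rfl : x = y := Fin.ext hx
      exact (hcol i' i x hii'.symm hd hb).symm

end Polyomino

theorem Fin.not_lt_and_lt_of_strictMono {q : ℕ} {β : Type*} [Preorder β] {c : Fin q → β}
    (hc : StrictMono c) {x y : Fin q} (hxy : (y : ℕ) = x + 1) (z : Fin q) :
    ¬ (c x < c z ∧ c z < c y) := by
  rintro ⟨hxz, hzy⟩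
  have := hc.lt_iff_lt.mp hxz
  have := hc.lt_iff_lt.mp hzy
  omega

def StairCell (m i j : ℕ) : Prop :=
  j = 0 ∨ (j = 1 ∧ (i = 0 ∨ i = m - 1)) ∨ (2 ≤ j ∧ (i + j = m ∨ i + j = m + 1))

instance (m i j : ℕ) : Decidable (StairCell m i j) := by unfold StairCell; infer_instance

def stair (m : ℕ) : Fin m → Fin (m + 1) → Bool := fun i j => decide (StairCell m i j)

section Stair

variable {m : ℕ}

@[simp]
theorem stair_eq_true {i : Fin m} {j : Fin (m + 1)} : stair m i j = true ↔ StairCell m i j :=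
  decide_eq_true_iff

theorem cellStep_stair {i j i' j' : ℕ} {hi : i < m} {hj : j < m + 1} (hi' : i' < m)
    (hj' : j' < m + 1) (h : StairCell m i j ∧ StairCell m i' j' ∧
      ((i = i' ∧ (j + 1 = j' ∨ j' + 1 = j)) ∨ (j = j' ∧ (i + 1 = i' ∨ i' + 1 = i)))) :
    CellStep (stair m) (⟨i, hi⟩, ⟨j, hj⟩) (⟨i', hi'⟩, ⟨j', hj'⟩) :=
  ⟨stair_eq_true.2 h.1, stair_eq_true.2 h.2.1, h.2.2⟩

theorem reflTransGen_stair_col_zero (hm : 0 < m) :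
    ∀ i (hi : i < m),
      ReflTransGen (CellStep (stair m)) (⟨i, hi⟩, ⟨0, by omega⟩) (⟨0, hm⟩, ⟨0, by omega⟩)
  | 0, _ => .refl
  | i + 1, _ => .head (cellStep_stair (i' := i) (j' := 0) (by omega) (by omega)
      (by unfold StairCell; omega)) (reflTransGen_stair_col_zero hm i _)

theorem reflTransGen_stair_staircase (hm : 0 < m) {j : ℕ} (h2 : 2 ≤ j) :
    ∀ {i : ℕ} (hi : i < m) (hj : j < m + 1), i + j = m + 1 →
      ReflTransGen (CellStep (stair m)) (⟨i, hi⟩, ⟨j, hj⟩) (⟨0, hm⟩, ⟨0, by omega⟩) := by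
  induction j, h2 using Nat.le_induction with
  | base =>
    intro i hi _ hij
    exact .head (cellStep_stair (i' := i) (j' := 1) hi (by omega) (by unfold StairCell; omega))
      (.head (cellStep_stair (i' := i) (j' := 0) hi (by omega) (by unfold StairCell; omega))
        (reflTransGen_stair_col_zero hm i hi))
  | succ j h2 ih =>
    intro i hi _ hij
    exact .head (cellStep_stair (i' := i) (j' := j) hi (by omega) (by unfold StairCell; omega))
      (.head (cellStep_stair (i' := i + 1) (j' := j) (by omega) (by omega)
        (by unfold StairCell; omega)) (ih (by omega) (by omega) (by omega)))

theorem reflTransGen_stair_origin (hm : 0 < m) {c : Fin m × Fin (m + 1)}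
    (hc : stair m c.1 c.2 = true) :
    ReflTransGen (CellStep (stair m)) c (⟨0, hm⟩, ⟨0, by omega⟩) := by
  obtain ⟨⟨i, hi⟩, ⟨j, hj⟩⟩ := c
  have hij : StairCell m i j := stair_eq_true.1 hc
  obtain rfl | ⟨rfl, rfl | rfl⟩ | ⟨h2, hup | hlow⟩ := hij
  · exact reflTransGen_stair_col_zero hm i hi
  · exact .single (cellStep_stair (i' := 0) (j' := 0) hm (by omega) (by unfold StairCell; omega))
  · exact .head (cellStep_stair (i' := m - 1) (j' := 0) hi (by omega)
      (by unfold StairCell; omega)) (reflTransGen_stair_col_zero hm _ _)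
  · exact .head (cellStep_stair (i' := i + 1) (j' := j) (by omega) hj
      (by unfold StairCell; omega)) (reflTransGen_stair_staircase hm h2 _ _ (by omega))
  · exact reflTransGen_stair_staircase hm h2 hi hj hlow

theorem isPolyomino_stair (hm : 0 < m) : IsPolyomino (stair m) :=
  isPolyomino_of_forall_reflTransGen _ (fun _ => reflTransGen_stair_origin hm)
    ⟨⟨0, hm⟩, 0, rfl, by simp [StairCell]⟩ ⟨⟨m - 1, by omega⟩, 0, rfl, by simp [StairCell]⟩
    ⟨⟨0, hm⟩, 0, rfl, by simp [StairCell]⟩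
    ⟨⟨0, hm⟩, Fin.last m, by simp, by
      simp only [stair_eq_true, Fin.val_last]; unfold StairCell; omega⟩

theorem isSubmatrix_M19_stair (hm : 4 ≤ m) : IsSubmatrix M19 (stair m) := by
  refine ⟨fun i => ⟨i, by omega⟩, ![⟨0, by omega⟩, ⟨1, by omega⟩, ⟨2, by omega⟩, Fin.last m],
    fun _ _ h => h, Fin.strictMono_iff_lt_succ.2 fun j => ?_, ?_⟩
  · fin_cases j <;> simp [Fin.lt_def, show 2 < m by omega]
  · intro i j
    fin_cases i <;> fin_cases j <;> simp [M19, stair, StairCell] <;> omega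

theorem stair_M19_occurrence {ρ : Fin 2 → Fin m} {κ : Fin 4 → Fin (m + 1)}
    (hρ : StrictMono ρ) (hκ : StrictMono κ) (h : ∀ i j, M19 i j = stair m (ρ i) (κ j)) :
    (ρ 0 : ℕ) = 0 ∧ (ρ 1 : ℕ) = 1 ∧ (κ 0 : ℕ) = 0 ∧ (κ 1 : ℕ) = 1 ∧ 2 ≤ (κ 2 : ℕ) ∧
      (κ 2 : ℕ) + 2 ≤ m ∧ (κ 3 : ℕ) = m := by
  have entry : ∀ i j, M19 i j = true ↔ StairCell m (ρ i) (κ j) := fun i j => by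
    rw [h]; exact stair_eq_true
  have h00 := (entry 0 0).1 rfl
  have h01 := (entry 0 1).1 rfl
  have h02 := mt (entry 0 2).2 (by decide)
  have h03 := (entry 0 3).1 rfl
  have h10 := (entry 1 0).1 rfl
  have h11 := mt (entry 1 1).2 (by decide)
  have h12 := mt (entry 1 2).2 (by decide)
  have h13 := (entry 1 3).1 rfl
  have hρ01 := Fin.lt_def.1 (hρ (show (0 : Fin 2) < 1 by decide))
  have hκ01 := Fin.lt_def.1 (hκ (show (0 : Fin 4) < 1 by decide))
  have hκ12 := Fin.lt_def.1 (hκ (show (1 : Fin 4) < 2 by decide))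
  have hκ23 := Fin.lt_def.1 (hκ (show (2 : Fin 4) < 3 by decide))
  have := (ρ 1).isLt
  have := (κ 3).isLt
  unfold StairCell at *
  omega

variable {p q : ℕ}

theorem surjective_of_isPolyomino_of_stair_cols {A : Fin p → Fin q → Bool} {r : Fin p → Fin m}
    {c : Fin q → Fin (m + 1)} (hc : StrictMono c) (hAB : ∀ i j, A i j = stair m (r i) (c j))
    (hA : IsPolyomino A) {x₀ x₁ x₂ x₃ : Fin q}
    (hcols : (c x₀ : ℕ) = 0 ∧ (c x₁ : ℕ) = 1 ∧ 2 ≤ (c x₂ : ℕ) ∧ (c x₂ : ℕ) + 2 ≤ m ∧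
      (c x₃ : ℕ) = m)
    {i i' : Fin p} (h₁ : A i x₁ = true) (h₃ : A i' x₃ = true) : Function.Surjective c := by
  by_contra hc'
  obtain ⟨j₀, hj₀⟩ := not_forall.1 hc'
  have hne : ∀ x, (c x : ℕ) ≠ j₀ := fun x h => hj₀ ⟨x, Fin.ext h⟩
  have hcell : ∀ k x, A k x = true → StairCell m (r k) (c x) := fun k x h =>
    stair_eq_true.1 ((hAB k x).symm.trans h)
  have key := iff_of_reflTransGen_cellStep (fun w => (c w.2 : ℕ) < j₀)
    (fun k x y hxy hx hy => by
      dsimp only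
      have hkx := hcell k x hx
      have hky := hcell k y hy
      have hxy' := Fin.lt_def.1 (hc (Fin.lt_def.2 (by omega : (x : ℕ) < y)))
      have h₁ := Fin.not_lt_and_lt_of_strictMono hc hxy x₁
      have h₂ := Fin.not_lt_and_lt_of_strictMono hc hxy x₂
      have := (c y).isLt
      have := hne x; have := hne y
      simp only [Fin.lt_def] at h₁ h₂
      unfold StairCell at hkx hky
      omega)
    (fun _ _ _ _ _ _ => Iff.rfl) (hA.2.2.2.1 (i, x₁) (i', x₃) h₁ h₃)
  have := hne x₀; have := hne x₁; have := hne x₃; have := j₀.isLt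
  dsimp only at key
  omega

theorem surjective_of_isPolyomino_of_stair_rows {A : Fin p → Fin (m + 1) → Bool}
    {r : Fin p → Fin m} (hr : StrictMono r) (hAB : ∀ i j, A i j = stair m (r i) j)
    (hA : IsPolyomino A) {y₀ y₁ : Fin p} (hrows : (r y₀ : ℕ) = 0 ∧ (r y₁ : ℕ) = 1)
    {x₀ x₃ : Fin (m + 1)} (hcols : (x₀ : ℕ) = 0 ∧ (x₃ : ℕ) = m)
    (h₀ : A y₀ x₀ = true) (h₃ : A y₀ x₃ = true) : Function.Surjective r := by
  by_contra hr'
  obtain ⟨i₀, hi₀⟩ := not_forall.1 hr'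
  have hne : ∀ i, (r i : ℕ) ≠ i₀ := fun i h => hi₀ ⟨i, Fin.ext h⟩
  have hi₀ : 2 ≤ (i₀ : ℕ) := by have := hne y₀; have := hne y₁; omega
  have hcell : ∀ k x, A k x = true → StairCell m (r k) x := fun k x h =>
    stair_eq_true.1 ((hAB k x).symm.trans h)
  have key := iff_of_reflTransGen_cellStep
    (fun w : Fin p × Fin (m + 1) => (w.2 : ℕ) ≤ 1 ∨ i₀ < (r w.1 : ℕ))
    (fun k x y hxy hx hy => by
      have hkx := hcell k x hx
      have hky := hcell k y hy
      have := hne k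
      have := i₀.isLt
      unfold StairCell at hkx hky
      dsimp only
      omega)
    (fun i i' x hii' hx hx' => by
      have hix := hcell i x hx
      have hix' := hcell i' x hx'
      have := Fin.lt_def.1 (hr (Fin.lt_def.2 (by omega : (i : ℕ) < i')))
      have := hne i; have := hne i'
      unfold StairCell at hix hix'
      dsimp only
      omega)
    (hA.2.2.2.1 (y₀, x₀) (y₀, x₃) h₀ h₃)
  have := i₀.isLt
  dsimp only at key
  omega

theorem size_eq_of_isSubmatrix_stair_of_isSubmatrix_M19 {A : Fin p → Fin q → Bool}
    (hA : IsPolyomino A) (hAB : IsSubmatrix A (stair m)) (hMA : IsSubmatrix M19 A) :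
    p = m ∧ q = m + 1 := by
  obtain ⟨r, c, hr, hc, hAB⟩ := hAB
  obtain ⟨ρ, κ, hρ, hκ, hMA⟩ := hMA
  have hM : ∀ i j, M19 i j = true → A (ρ i) (κ j) = true := fun i j h => (hMA i j) ▸ h
  obtain ⟨hρ0, hρ1, hκ0, hκ1, hκ2, hκ2', hκ3⟩ := stair_M19_occurrence (hr.comp hρ) (hc.comp hκ)
    fun i j => (hMA i j).trans (hAB _ _)
  simp only [Function.comp_apply] at hρ0 hρ1 hκ0 hκ1 hκ2 hκ2' hκ3
  have hcs := surjective_of_isPolyomino_of_stair_cols hc hAB hA ⟨hκ0, hκ1, hκ2, hκ2', hκ3⟩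
    (hM 0 1 rfl) (hM 0 3 rfl)
  let e := hc.orderIsoOfSurjective c hcs
  obtain rfl : q = m + 1 := Fin.equiv_iff_eq.1 ⟨e.toEquiv⟩
  have hcid : ∀ j, c j = j := fun j => Fin.ext (Fin.coe_orderIso_apply e j)
  simp only [hcid] at hAB hκ0 hκ3
  have hrs := surjective_of_isPolyomino_of_stair_rows hr hAB hA ⟨hρ0, hρ1⟩ ⟨hκ0, hκ3⟩
    (hM 0 0 rfl) (hM 0 3 rfl)
  exact ⟨Fin.equiv_iff_eq.1 ⟨(hr.orderIsoOfSurjective r hrs).toEquiv⟩, rfl⟩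

end Stair

/-- There are arbitrarily large polyominoes `Q` containing `M19`
as a submatrix all of whose proper polyomino submatrices avoid `M19`; hence
the polyomino class `Av(M19)` has an infinite polyomino-basis. -/
theorem stmt_19 :
    ∀ N : ℕ, ∃ (m n : ℕ) (Q : Fin m → Fin n → Bool),
      IsPolyomino Q ∧ IsSubmatrix M19 Q ∧
      (∀ (p q : ℕ) (A : Fin p → Fin q → Bool),
        IsPolyomino A → IsSubmatrix A Q → (p < m ∨ q < n) → ¬ IsSubmatrix M19 A) ∧
      N < m + n := by
  intro N
  refine ⟨N + 4, N + 5, stair (N + 4), isPolyomino_stair (by omega),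
    isSubmatrix_M19_stair (by omega), fun p q A hA hAB hpq hMA => ?_, by omega⟩
  obtain ⟨rfl, rfl⟩ := size_eq_of_isSubmatrix_stair_of_isSubmatrix_M19 hA hAB hMA
  omega
end
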